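/- arXiv:1508.04758 — 3 statements merged into one kernel-verified Lean document; each statement's English description precedes it below -/
import Mathlib

section
/- For every positive integer n, n! = √(2πn) · n^n · e^{-n} · e^{R_n} for some real number R_n with 0 ≤ R_n ≤ 1/(12n). -/
open Real Nat

open Filter Topology Stirling in
/-- Robbins' improved bound on successive differences of `log (stirlingSeq ·)`. -/
lemma robbins_key (m : ℕ) :
    Real.log (stirlingSeq (m + 1)) - Real.log (stirlingSeq (m + 2)) ≤
      1 / (12 * (m + 1 : ℝ) * (m + 2 : ℝ)) := by
  have h_nonneg : (0 : ℝ) ≤ ((1 : ℝ) / (2 * ↑(m + 1) + 1)) ^ 2 := sq_nonneg _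
  set x : ℝ := ((1 : ℝ) / (2 * ↑(m + 1) + 1)) ^ 2 with hx
  have hx_lt : x < 1 := by
    rw [hx, one_div, inv_pow]
    refine inv_lt_one_of_one_lt₀ (one_lt_pow₀ ?_ two_ne_zero)
    have : (0:ℝ) < ((m:ℝ)+1) := by positivity
    push_cast
    linarith
  have g : HasSum (fun k : ℕ => (1:ℝ)/3 * x ^ (k + 1)) ((1:ℝ)/3 * (x / (1 - x))) := by
    have := (hasSum_geometric_of_lt_one h_nonneg hx_lt).mul_left x
    simp_rw [← _root_.pow_succ'] at this
    exact this.mul_left _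
  have hab (k : ℕ) : (1 : ℝ) / (2 * ↑(k + 1) + 1) * x ^ (k + 1) ≤ (1:ℝ)/3 * x ^ (k + 1) := by
    have hxp : (0:ℝ) ≤ x ^ (k+1) := pow_nonneg h_nonneg _
    have h3 : (3:ℝ) ≤ 2 * ↑(k + 1) + 1 := by
      have : (1:ℝ) ≤ (↑(k+1) : ℝ) := by exact_mod_cast Nat.one_le_iff_ne_zero.mpr (Nat.succ_ne_zero k)
      linarith
    have : (1 : ℝ) / (2 * ↑(k + 1) + 1) ≤ 1/3 := by
      apply one_div_le_one_div_of_le (by norm_num) h3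
    exact mul_le_mul_of_nonneg_right this hxp
  have hsum := log_stirlingSeq_diff_hasSum m
  have hle : Real.log (stirlingSeq (m + 1)) - Real.log (stirlingSeq (m + 2)) ≤
      (1:ℝ)/3 * (x / (1 - x)) := by
    refine hasSum_le (fun k => ?_) hsum g
    exact hab k
  refine hle.trans (le_of_eq ?_)
  have h2m : (2 * ((m:ℝ)+1) + 1) ≠ 0 := by positivity
  have h1x : (1:ℝ) - x ≠ 0 := by linarith
  rw [hx] at h1x ⊢
  push_cast at h1x ⊢
  have h4ne : (4*((m:ℝ)+1)*((m:ℝ)+2)) ≠ 0 := by positivity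
  have key : ((1:ℝ)/(2*((m:ℝ)+1)+1))^2 / (1 - ((1:ℝ)/(2*((m:ℝ)+1)+1))^2)
      = 1 / (4*((m:ℝ)+1)*((m:ℝ)+2)) := by
    rw [div_eq_div_iff h1x h4ne]
    field_simp
    ring
  rw [key, one_div_mul_one_div]
  congr 1
  ring

open Filter Topology Stirling in
theorem stirling_with_robbins_bounds (n : ℕ) (hn : 0 < n) :
    ∃ R : ℝ, 0 ≤ R ∧ R ≤ 1 / (12 * n) ∧
      (n ! : ℝ) = Real.sqrt (2 * π * n) * n ^ n * Real.exp (-n) * Real.exp R := by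
  have hpi : (0:ℝ) < π := Real.pi_pos
  have hsqrtpi : (0:ℝ) < Real.sqrt π := Real.sqrt_pos.mpr hpi
  -- L m = log (stirlingSeq (m+1))
  set L : ℕ → ℝ := fun m => Real.log (stirlingSeq (m + 1)) with hL
  have hLtendsto : Tendsto L atTop (𝓝 (Real.log (Real.sqrt π))) := by
    have h1 : Tendsto (fun m : ℕ => stirlingSeq (m + 1)) atTop (𝓝 (Real.sqrt π)) :=
      tendsto_stirlingSeq_sqrt_pi.comp (tendsto_add_atTop_nat 1)
    exact ((Real.continuousAt_log hsqrtpi.ne').tendsto.comp h1)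
  -- lower bound: L is antitone, so log √π ≤ L m
  have hLanti : Antitone L := fun a b hab => log_stirlingSeq'_antitone hab
  have hlow : ∀ m, Real.log (Real.sqrt π) ≤ L m := fun m => hLanti.le_of_tendsto hLtendsto m
  -- upper bound: g m = L m - 1/(12(m+1)) is monotone with limit log √π
  set g : ℕ → ℝ := fun m => L m - 1 / (12 * ((m:ℝ) + 1)) with hg
  have hgmono : Monotone g := by
    apply monotone_nat_of_le_succ
    intro m
    have hkey : L m - L (m + 1) ≤ 1 / (12 * ((m:ℝ) + 1) * ((m:ℝ) + 2)) := robbins_key m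
    have heq : 1 / (12 * ((m:ℝ)+1)) - 1 / (12 * ((m:ℝ)+2)) = 1 / (12 * ((m:ℝ) + 1) * ((m:ℝ) + 2)) := by
      have h1 : ((m:ℝ)+1) ≠ 0 := by positivity
      have h2 : ((m:ℝ)+2) ≠ 0 := by positivity
      field_simp
      ring
    simp only [hg]
    push_cast
    rw [show ((m:ℝ)+1+1) = (m:ℝ)+2 by ring]
    linarith
  have hgtendsto : Tendsto g atTop (𝓝 (Real.log (Real.sqrt π))) := by
    have h0 : Tendsto (fun m : ℕ => 1 / (12 * ((m:ℝ) + 1))) atTop (𝓝 0) := by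
      apply Tendsto.comp tendsto_inv_atTop_zero ?_ |>.congr (fun m => by rw [Function.comp, one_div])
      apply Filter.Tendsto.const_mul_atTop (by norm_num : (0:ℝ) < 12)
      exact tendsto_atTop_add_const_right _ _ tendsto_natCast_atTop_atTop
    have := hLtendsto.sub h0
    rw [sub_zero] at this
    exact this
  have hupp : ∀ m, g m ≤ Real.log (Real.sqrt π) := fun m => hgmono.ge_of_tendsto hgtendsto m
  -- now instantiate at m = n - 1
  obtain ⟨m, rfl⟩ : ∃ m, n = m + 1 := ⟨n - 1, (Nat.succ_pred_eq_of_pos hn).symm⟩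
  refine ⟨L m - Real.log (Real.sqrt π), by linarith [hlow m], ?_, ?_⟩
  · have := hupp m
    simp only [hg] at this
    push_cast
    linarith
  · have hspos : 0 < stirlingSeq (m + 1) := stirlingSeq'_pos m
    have hexp : Real.exp (L m - Real.log (Real.sqrt π)) = stirlingSeq (m + 1) / Real.sqrt π := by
      rw [Real.exp_sub, hL, Real.exp_log hspos, Real.exp_log hsqrtpi]
    have hc : (0:ℝ) < (↑(m+1) : ℝ) := by exact_mod_cast m.succ_pos
    have hsplit : Real.sqrt (2 * π * (↑(m+1):ℝ)) = Real.sqrt π * Real.sqrt (2 * (↑(m+1):ℝ)) := by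
      rw [show (2:ℝ) * π * (↑(m+1):ℝ) = π * (2 * (↑(m+1):ℝ)) by ring, Real.sqrt_mul hpi.le]
    have hpow : ((↑(m+1) : ℝ) / Real.exp 1) ^ (m+1)
        = (↑(m+1) : ℝ) ^ (m+1) * Real.exp (-(↑(m+1):ℝ)) := by
      rw [div_pow, Real.exp_neg, ← Real.exp_nat_mul, mul_one, div_eq_mul_inv]
    have hs2 : Real.sqrt (2 * (↑(m+1):ℝ)) ≠ 0 := (Real.sqrt_pos.mpr (by linarith)).ne'
    have hexpne : Real.exp (-(↑(m+1):ℝ)) ≠ 0 := (Real.exp_pos _).ne'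
    have hpowne : ((↑(m+1):ℝ)) ^ (m+1) ≠ 0 := pow_ne_zero _ hc.ne'
    rw [hexp, hsplit, stirlingSeq, hpow]
    field_simp
end

section
/- Let G be an upper triangular real matrix of size (N+1)×(N+1), indexed from 0, whose diagonal entries are nonzero, and suppose G has the checkerboard sparsity pattern G_{i,j} = 0 whenever i > j or i ≢ j (mod 2). Then G is invertible and G^{-1} is also upper triangular with G^{-1}_{i,j} = 0 whenever i > j or i ≢ j (mod 2). -/
open Matrix

theorem checkerboard_upper_triangular_inverse (N : ℕ)
    (G : Matrix (Fin (N + 1)) (Fin (N + 1)) ℝ)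
    (hzero : ∀ i j : Fin (N + 1), ((j : ℕ) < (i : ℕ) ∨ (i : ℕ) % 2 ≠ (j : ℕ) % 2) → G i j = 0)
    (hdiag : ∀ i : Fin (N + 1), G i i ≠ 0) :
    IsUnit G ∧
      ∀ i j : Fin (N + 1), ((j : ℕ) < (i : ℕ) ∨ (i : ℕ) % 2 ≠ (j : ℕ) % 2) → G⁻¹ i j = 0 := by
  have hbt : G.BlockTriangular id := by
    intro i j hij
    exact hzero i j (Or.inl hij)
  have hdet : G.det ≠ 0 := by
    rw [Matrix.det_of_upperTriangular hbt]
    exact Finset.prod_ne_zero_iff.2 fun i _ => hdiag i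
  have hUnit : IsUnit G := (Matrix.isUnit_iff_isUnit_det G).2 (isUnit_iff_ne_zero.2 hdet)
  have : Invertible G := hUnit.invertible
  have htri : G⁻¹.BlockTriangular id := Matrix.blockTriangular_inv_of_blockTriangular hbt
  -- parity via conjugation by D = diagonal (-1)^i
  set D : Matrix (Fin (N + 1)) (Fin (N + 1)) ℝ :=
    Matrix.diagonal (fun i => (-1 : ℝ) ^ (i : ℕ)) with hD
  have hDD : D * D = 1 := by
    rw [hD, Matrix.diagonal_mul_diagonal, ← Matrix.diagonal_one]
    exact congrArg Matrix.diagonal (funext fun i => by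
      rw [← pow_add, ← two_mul]; exact Even.neg_one_pow (even_two_mul _))
  have hDinv : D⁻¹ = D := Matrix.inv_eq_right_inv hDD
  have key : ∀ (M : Matrix (Fin (N+1)) (Fin (N+1)) ℝ) (i j : Fin (N+1)),
      (D * M * D) i j = (-1 : ℝ) ^ ((i : ℕ) + (j : ℕ)) * M i j := by
    intro M i j
    rw [hD, Matrix.mul_diagonal, Matrix.diagonal_mul, pow_add]
    ring
  have hconj : D * G * D = G := by
    ext i j
    rw [key]
    by_cases h : (i : ℕ) % 2 = (j : ℕ) % 2
    · rw [Even.neg_one_pow (Nat.even_iff.2 (by omega)), one_mul]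
    · rw [hzero i j (Or.inr h)]; ring
  have hinvconj : G⁻¹ = D * G⁻¹ * D := by
    conv_lhs => rw [← hconj]
    rw [Matrix.mul_inv_rev, Matrix.mul_inv_rev, hDinv, mul_assoc]
  refine ⟨hUnit, fun i j h => ?_⟩
  rcases h with h | h
  · exact htri h
  · have heq := congrFun (congrFun hinvconj i) j
    rw [key, Odd.neg_one_pow (Nat.odd_iff.2 (by omega))] at heq
    linarith
end

section
/- Let R̃ ∈ ℝ^{(m+1)×(N+1)}, let S ⊂ {0,...,N} with |S| = s, and suppose all singular values of the column submatrix R̃_S lie in [√(1-ε), √(1+ε)] for some ε ∈ (0,1). Let f̃ ∈ ℝ^{N+1}, let y = R̃ f̃, and let z_min = argmin_{z ∈ ℝ^s} ‖R̃_S z - y‖₂. Writing f̃_S and f̃_{S^c} for the restrictions of f̃ to S and its complement (extended by zero), suppose that ‖R̃ f̃_{S^c}‖₂ ≤ √(1+ε)(‖f̃_{S^c}‖₂ + ‖f̃_{S^c}‖₁/√s), and suppose f' ∈ ℝ^s satisfies ‖R̃_S(z_min - f')‖₂ ≤ δ. Then the s-sparse vector z obtained by placing f' on S satisfies ‖f̃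 - z‖₂ ≤ (1 + 2√((1+ε)/(1-ε))) ‖f̃_{S^c}‖₂ + (2√((1+ε)/(1-ε))/√s) ‖f̃_{S^c}‖₁ + δ/√(1-ε). -/
open Real Finset Matrix

/-- The Euclidean (`ℓ²`) norm of a finitely-indexed real vector. -/
noncomputable def l2norm {ι : Type*} [Fintype ι] (v : ι → ℝ) : ℝ :=
  Real.sqrt (∑ i, v i ^ 2)

/-- The `ℓ¹` norm of a finitely-indexed real vector. -/
noncomputable def l1norm {ι : Type*} [Fintype ι] (v : ι → ℝ) : ℝ :=
  ∑ i, |v i|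

lemma l2norm_eq_norm {ι : Type*} [Fintype ι] (v : ι → ℝ) :
    l2norm v = ‖(WithLp.equiv 2 (ι → ℝ)).symm v‖ := by
  rw [EuclideanSpace.norm_eq]
  simp [l2norm, sq_abs]

lemma l2_triangle {ι : Type*} [Fintype ι] (a b : ι → ℝ) :
    l2norm (a + b) ≤ l2norm a + l2norm b := by
  simp only [l2norm_eq_norm]
  rw [show (WithLp.equiv 2 (ι → ℝ)).symm (a + b)
      = (WithLp.equiv 2 (ι → ℝ)).symm a + (WithLp.equiv 2 (ι → ℝ)).symm b from rfl]
  exact norm_add_le _ _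

lemma l2_neg {ι : Type*} [Fintype ι] (a : ι → ℝ) : l2norm (-a) = l2norm a := by
  simp [l2norm]

theorem coefficient_estimation (m N s : ℕ) (hs : 0 < s)
    (R : Matrix (Fin (m + 1)) (Fin (N + 1)) ℝ)
    (S : Finset (Fin (N + 1))) (hScard : S.card = s)
    (ε δ : ℝ) (hε : ε ∈ Set.Ioo (0 : ℝ) 1)
    (RS : Matrix (Fin (m + 1)) {j // j ∈ S} ℝ) (hRS : ∀ i j, RS i j = R i (j : Fin (N + 1)))
    -- all singular values of `R_S` lie in `[√(1-ε), √(1+ε)]`: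
    (hiso : ∀ v : {j // j ∈ S} → ℝ,
      Real.sqrt (1 - ε) * l2norm v ≤ l2norm (RS.mulVec v) ∧
      l2norm (RS.mulVec v) ≤ Real.sqrt (1 + ε) * l2norm v)
    (f : Fin (N + 1) → ℝ) (y : Fin (m + 1) → ℝ) (hy : y = R.mulVec f)
    (zmin : {j // j ∈ S} → ℝ)
    (hzmin : ∀ z : {j // j ∈ S} → ℝ,
      l2norm (RS.mulVec zmin - y) ≤ l2norm (RS.mulVec z - y))
    (f' : {j // j ∈ S} → ℝ) (hf' : l2norm (RS.mulVec (zmin - f')) ≤ δ)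
    (fS fSc : Fin (N + 1) → ℝ)
    (hfS : ∀ j, fS j = if j ∈ S then f j else 0)
    (hfSc : ∀ j, fSc j = if j ∈ S then 0 else f j)
    (hRfSc : l2norm (R.mulVec fSc) ≤
      Real.sqrt (1 + ε) * (l2norm fSc + l1norm fSc / Real.sqrt s))
    (z : Fin (N + 1) → ℝ) (hz : ∀ j, z j = if h : j ∈ S then f' ⟨j, h⟩ else 0) :
    l2norm (f - z) ≤
      (1 + 2 * Real.sqrt ((1 + ε) / (1 - ε))) * l2norm fSc +
        (2 * Real.sqrt ((1 + ε) / (1 - ε)) / Real.sqrt s) * l1norm fSc +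
        δ / Real.sqrt (1 - ε) := by
  obtain ⟨hε0, hε1⟩ := hε
  set A := l2norm fSc with hA
  set B := l1norm fSc with hB
  set K := Real.sqrt (1 + ε) with hK
  set k := Real.sqrt (1 - ε) with hk
  have hkpos : 0 < k := Real.sqrt_pos.mpr (by linarith)
  have hKk : Real.sqrt ((1 + ε) / (1 - ε)) = K / k := Real.sqrt_div (by linarith) _
  have hspos : (0 : ℝ) < Real.sqrt s := Real.sqrt_pos.mpr (by exact_mod_cast hs)
  -- the restriction of f to S, and the error vector on S
  set fr : {j // j ∈ S} → ℝ := fun j => f j with hfr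
  set w : {j // j ∈ S} → ℝ := fr - f' with hw
  set uS : Fin (N + 1) → ℝ := fun j => if h : j ∈ S then w ⟨j, h⟩ else 0 with huS
  -- decomposition f - z = uS + fSc
  have hdecomp : f - z = uS + fSc := by
    funext j
    simp only [Pi.sub_apply, Pi.add_apply, hz j, hfSc j, huS]
    by_cases h : j ∈ S <;> simp [h, hw, hfr]
  have huSw : l2norm uS = l2norm w := by
    unfold l2norm
    congr 1
    rw [← Finset.sum_subset (Finset.subset_univ S)
      (by intro j _ hj; simp [huS, hj])]
    rw [← Finset.sum_attach S (fun j => uS j ^ 2), Finset.univ_eq_attach]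
    refine Finset.sum_congr rfl fun j _ => ?_
    simp [huS, j.2]
  -- RS applied to the restriction equals R applied to fS
  have hRSfr : RS.mulVec fr = R.mulVec fS := by
    funext i
    simp only [Matrix.mulVec, dotProduct]
    rw [← Finset.sum_subset (Finset.subset_univ S)
      (by intro j _ hj; simp [hfS j, hj])]
    rw [← Finset.sum_attach S (fun j => R i j * fS j), Finset.univ_eq_attach]
    refine Finset.sum_congr rfl fun j _ => ?_
    simp [hRS, hfS, j.2, hfr]
  have hfsum : f = fS + fSc := by
    funext j
    by_cases h : j ∈ S <;> simp [hfS j, hfSc j, h]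
  have hyfr : RS.mulVec fr - y = -(R.mulVec fSc) := by
    rw [hRSfr, hy, hfsum, Matrix.mulVec_add]
    abel
  have hfry : l2norm (RS.mulVec fr - y) = l2norm (R.mulVec fSc) := by
    rw [hyfr, l2_neg]
  -- bound on the error on S
  have hkw : k * l2norm w ≤ 2 * (K * (A + B / Real.sqrt s)) + δ := by
    have h2 := (hiso w).1
    have heq : RS.mulVec w =
        (RS.mulVec fr - y) + ((y - RS.mulVec zmin) + RS.mulVec (zmin - f')) := by
      rw [hw, Matrix.mulVec_sub, Matrix.mulVec_sub]
      abel
    have tri : l2norm (RS.mulVec w) ≤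
        l2norm (RS.mulVec fr - y) +
          (l2norm (y - RS.mulVec zmin) + l2norm (RS.mulVec (zmin - f'))) := by
      rw [heq]
      calc _ ≤ l2norm (RS.mulVec fr - y) +
            l2norm ((y - RS.mulVec zmin) + RS.mulVec (zmin - f')) := l2_triangle _ _
        _ ≤ _ := by
            gcongr
            exact l2_triangle _ _
    have hmin : l2norm (y - RS.mulVec zmin) ≤ l2norm (RS.mulVec fr - y) := by
      have := hzmin fr
      rwa [show y - RS.mulVec zmin = -(RS.mulVec zmin - y) by abel, l2_neg]
    have hbig : l2norm (R.mulVec fSc) ≤ K * (A + B / Real.sqrt s) := hRfSc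
    rw [hfry] at tri hmin
    linarith
  -- putting everything together
  have h1 : l2norm (f - z) ≤ l2norm w + A := by
    rw [hdecomp]
    have := l2_triangle uS fSc
    rwa [huSw] at this
  have hwb : l2norm w ≤ (2 * (K * (A + B / Real.sqrt s)) + δ) / k := by
    rw [le_div_iff₀ hkpos]
    linarith [hkw]
  have hfinal : (2 * (K * (A + B / Real.sqrt s)) + δ) / k + A =
      (1 + 2 * (K / k)) * A + (2 * (K / k) / Real.sqrt s) * B + δ / k := by
    field_simp
    ring
  rw [hKk]
  linarith [h1, hwb, hfinal]
end
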